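/- Let λ, α ∈ ℂ \ {0} and define operators on ℂ[s,t]: E_0(g)(s,t) = α·g(s, t−2) and E_1(g)(s,t) = λ·α·g(s−1, t−2). Then for every polynomial g(t) ∈ ℂ[t] and every natural number k ≥ 1: (λ E_0)^k(s·g(t)) = (λα)^k·s·g(t−2k) and E_1^k(s·g(t)) = (λα)^k·(s−k)·g(t−2k); consequently g(t−2k) = (1/(k(λα)^k))·((λE_0)^k(s·g(t)) − E_1^k(s·g(t))). -/

import Mathlib

open MvPolynomial

abbrev R2 : Type := MvPolynomial (Fin 2) ℂ

/-- Substitution `g(s,t) ↦ g(s - u, t + v)`. -/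
noncomputable def sh (u v : ℂ) : R2 →ₐ[ℂ] R2 := aeval ![X 0 - C u, X 1 + C v]

/-- The embedding `ℂ[t] → ℂ[s,t]`, sending the variable to `t = X 1`. -/
noncomputable def embT (p : Polynomial ℂ) : R2 := Polynomial.aeval (X 1 : R2) p

/-- Action of `e_0` in `Ω(λ,α,β,γ)`: `g(s,t) ↦ α g(s, t-2)`. -/
noncomputable def E0 (a : ℂ) (g : R2) : R2 := C a * sh 0 (-2) g

/-- Action of `e_1` in `Ω(λ,α,β,γ)`: `g(s,t) ↦ λ α g(s-1, t-2)`. -/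
noncomputable def E1 (lam a : ℂ) (g : R2) : R2 := C (lam * a) * sh 1 (-2) g


/-!
`λ E₀` and `E₁` are both `λα` times a substitution `sh u v`, and `sh` is additive in `(u, v)`, so
their `k`-th iterates are `(λα)^k` times `sh (k u) (k v)`. On `s g(t)` the two iterates differ
only in the factor `s` versus `s - k`, so their difference is `k (λα)^k g(t - 2k)`.
-/

theorem iterate_algebraMap_mul_algHom {R A : Type*} [CommSemiring R] [Semiring A] [Algebra R A]
    (φ : A →ₐ[R] A) (c : R) (n : ℕ) (x : A) :
    (fun y => algebraMap R A c * φ y)^[n] x = algebraMap R A (c ^ n) * φ^[n] x := by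
  induction n with
  | zero => simp
  | succ n ih =>
    rw [Function.iterate_succ_apply', ih, Function.iterate_succ_apply', map_mul, AlgHom.commutes,
      ← mul_assoc, ← map_mul, pow_succ']

lemma sh_X0 (u v : ℂ) : sh u v (X 0) = X 0 - C u := by simp [sh]

lemma sh_X1 (u v : ℂ) : sh u v (X 1) = X 1 + C v := by simp [sh]

lemma sh_C (u v c : ℂ) : sh u v (C c) = C c := by
  rw [← algebraMap_eq, AlgHom.commutes]

lemma sh_comp_sh (u v u' v' : ℂ) : (sh u v).comp (sh u' v') = sh (u + u') (v + v') := by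
  refine MvPolynomial.algHom_ext (Fin.forall_fin_two.mpr ⟨?_, ?_⟩)
  · simp only [AlgHom.comp_apply, sh_X0, map_sub, sh_C, map_add]
    ring
  · simp only [AlgHom.comp_apply, sh_X1, map_add, sh_C]
    ring

lemma sh_zero : sh 0 0 = AlgHom.id ℂ R2 := by
  refine MvPolynomial.algHom_ext (Fin.forall_fin_two.mpr ⟨?_, ?_⟩) <;> simp [sh_X0, sh_X1]

lemma iterate_sh (u v : ℂ) (n : ℕ) : (sh u v)^[n] = sh (n * u) (n * v) := by
  induction n with
  | zero =>
    rw [Function.iterate_zero, Nat.cast_zero, zero_mul, zero_mul, sh_zero, AlgHom.coe_id]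
  | succ n ih =>
    rw [Function.iterate_succ', ih, ← AlgHom.coe_comp, sh_comp_sh]
    push_cast
    ring_nf

lemma sh_embT (u v : ℂ) (g : Polynomial ℂ) :
    sh u v (embT g) = embT (g.comp (Polynomial.X + Polynomial.C v)) := by
  rw [embT, embT, Polynomial.aeval_comp, ← Polynomial.aeval_algHom_apply, sh_X1]
  simp [algebraMap_eq]

lemma iterate_C_mul_sh_X0_mul_embT (c u v : ℂ) (g : Polynomial ℂ) (n : ℕ) :
    (fun x : R2 => C c * sh u v x)^[n] (X 0 * embT g)
      = C (c ^ n) * (X 0 - C (n * u)) * embT (g.comp (Polynomial.X + Polynomial.C (n * v))) := by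
  rw [← algebraMap_eq, iterate_algebraMap_mul_algHom, iterate_sh, map_mul, sh_X0, sh_embT,
    algebraMap_eq, mul_assoc]

theorem stmt4 (lam a : ℂ) (hlam : lam ≠ 0) (ha : a ≠ 0)
    (g : Polynomial ℂ) (k : ℕ) (hk : 1 ≤ k) :
    (fun x : R2 => C lam * E0 a x)^[k] (X 0 * embT g)
        = C ((lam * a) ^ k) * X 0
            * embT (g.comp (Polynomial.X - Polynomial.C (2 * (k : ℂ)))) ∧
    (E1 lam a)^[k] (X 0 * embT g)
        = C ((lam * a) ^ k) * (X 0 - C (k : ℂ))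
            * embT (g.comp (Polynomial.X - Polynomial.C (2 * (k : ℂ)))) ∧
    embT (g.comp (Polynomial.X - Polynomial.C (2 * (k : ℂ))))
        = C (1 / ((k : ℂ) * (lam * a) ^ k))
            * ((fun x : R2 => C lam * E0 a x)^[k] (X 0 * embT g)
                - (E1 lam a)^[k] (X 0 * embT g)) := by
  have hshift :
      Polynomial.X + Polynomial.C ((k : ℂ) * -2) = Polynomial.X - Polynomial.C (2 * (k : ℂ)) := by
    rw [mul_neg, map_neg, mul_comm, sub_eq_add_neg]
  have h0 : (fun x : R2 => C lam * E0 a x)^[k] (X 0 * embT g)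
      = C ((lam * a) ^ k) * X 0 * embT (g.comp (Polynomial.X - Polynomial.C (2 * (k : ℂ)))) := by
    have hE0 : (fun x : R2 => C lam * E0 a x) = fun x => C (lam * a) * sh 0 (-2) x := by
      funext x
      rw [E0, ← mul_assoc, ← map_mul]
    rw [hE0, iterate_C_mul_sh_X0_mul_embT, hshift, mul_zero, map_zero, sub_zero]
  have h1 : (E1 lam a)^[k] (X 0 * embT g)
      = C ((lam * a) ^ k) * (X 0 - C (k : ℂ))
          * embT (g.comp (Polynomial.X - Polynomial.C (2 * (k : ℂ)))) := by
    change (fun x : R2 => C (lam * a) * sh 1 (-2) x)^[k] _ = _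
    rw [iterate_C_mul_sh_X0_mul_embT, hshift, mul_one]
  refine ⟨h0, h1, ?_⟩
  have hk0 : (k : ℂ) ≠ 0 := Nat.cast_ne_zero.mpr (by omega)
  have hla : (lam * a) ^ k ≠ 0 := pow_ne_zero _ (mul_ne_zero hlam ha)
  have hc : (C (1 / ((k : ℂ) * (lam * a) ^ k)) : R2) * C ((lam * a) ^ k) * C (k : ℂ) = 1 := by
    rw [← map_mul, ← map_mul, ← C_1]
    congr 1
    field_simp
  rw [h0, h1]
  linear_combination (-embT (g.comp (Polynomial.X - Polynomial.C (2 * (k : ℂ))))) * hc
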